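/- arXiv:2605.22123 — 7 statements merged into one kernel-verified Lean document; each statement's English description precedes it below -/
import Mathlib

section
/- If two reward functions on state-action-state triples differ exactly by a potential-based shaping term F(s,a,s') = γφ(s') - φ(s), then for every policy the corresponding action-value functions satisfy Q'(s,a) = Q(s,a) - φ(s) for all states s and actions a, where Q' is the action-value under the shaped reward. -/
/-- If the shaped reward differs from the original one by the potential-based
shaping term `F(s,a,s') = γ φ s' - φ s`, then for any stationary policy `π` the
corresponding action-value functions (the unique bounded solutions of the
Bellman evaluation equations) satisfy `Q' s a = Q s a - φ s`. -/
theorem pbrs_policy_Q_shift {S A : Type*} [Fintype S] [Fintype A]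
    (P : S → A → S → ℝ) (R R' : S → A → S → ℝ) (γ : ℝ) (φ : S → ℝ)
    (π : S → A → ℝ)
    (hγ0 : 0 ≤ γ) (hγ1 : γ < 1)
    (hPnonneg : ∀ s a s', 0 ≤ P s a s')
    (hPsum : ∀ s a, ∑ s' : S, P s a s' = 1)
    (hπnonneg : ∀ s a, 0 ≤ π s a)
    (hπsum : ∀ s, ∑ a : A, π s a = 1)
    (hR' : ∀ s a s', R' s a s' = R s a s' + γ * φ s' - φ s)
    (Q Q' : S → A → ℝ)
    (hQ : ∀ s a, Q s a =
      ∑ s' : S, P s a s' * (R s a s' + γ * ∑ a' : A, π s' a' * Q s' a'))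
    (hQ' : ∀ s a, Q' s a =
      ∑ s' : S, P s a s' * (R' s a s' + γ * ∑ a' : A, π s' a' * Q' s' a')) :
    ∀ s a, Q' s a = Q s a - φ s := by
  set D : S → A → ℝ := fun s a => Q' s a - Q s a + φ s with hDdef
  have hD : ∀ s a, D s a = γ * ∑ s' : S, P s a s' * ∑ a' : A, π s' a' * D s' a' := by
    intro s a
    have hsum : ∀ s' : S, ∑ a' : A, π s' a' * (Q' s' a' - Q s' a' + φ s')
        = (∑ a' : A, π s' a' * Q' s' a') - (∑ a' : A, π s' a' * Q s' a') + φ s' := by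
      intro s'
      have : ∀ a' : A, π s' a' * (Q' s' a' - Q s' a' + φ s')
          = π s' a' * Q' s' a' - π s' a' * Q s' a' + π s' a' * φ s' := by
        intro a'; ring
      rw [Finset.sum_congr rfl fun a' _ => this a']
      rw [Finset.sum_add_distrib, Finset.sum_sub_distrib, ← Finset.sum_mul, hπsum, one_mul]
    simp only [hDdef, hQ s a, hQ' s a, hR']
    rw [Finset.mul_sum, ← Finset.sum_sub_distrib]
    have pt : ∀ s' ∈ (Finset.univ : Finset S),
        P s a s' * (R s a s' + γ * φ s' - φ s + γ * ∑ a' : A, π s' a' * Q' s' a')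
          - P s a s' * (R s a s' + γ * ∑ a' : A, π s' a' * Q s' a')
        = γ * (P s a s' * ((∑ a' : A, π s' a' * Q' s' a')
            - (∑ a' : A, π s' a' * Q s' a') + φ s')) - P s a s' * φ s := by
      intro s' _; ring
    rw [Finset.sum_congr rfl pt, Finset.sum_sub_distrib, ← Finset.sum_mul, hPsum, one_mul,
      sub_add_cancel]
    exact Finset.sum_congr rfl fun s' _ => by rw [hsum s']
  intro s a
  obtain ⟨⟨s₀, a₀⟩, -, hmax⟩ := Finset.exists_max_image (Finset.univ : Finset (S × A))
    (fun p => |D p.1 p.2|) ⟨(s, a), Finset.mem_univ _⟩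
  set M : ℝ := |D s₀ a₀| with hMdef
  have hM : ∀ s' a', |D s' a'| ≤ M := fun s' a' => hmax (s', a') (Finset.mem_univ _)
  have hM0 : 0 ≤ M := abs_nonneg _
  have inner : ∀ s' : S, |∑ a' : A, π s' a' * D s' a'| ≤ M := by
    intro s'
    calc |∑ a' : A, π s' a' * D s' a'| ≤ ∑ a' : A, |π s' a' * D s' a'| :=
          Finset.abs_sum_le_sum_abs _ _
      _ ≤ ∑ a' : A, π s' a' * M := by
          refine Finset.sum_le_sum fun a' _ => ?_
          rw [abs_mul, abs_of_nonneg (hπnonneg s' a')]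
          exact mul_le_mul_of_nonneg_left (hM s' a') (hπnonneg s' a')
      _ = M := by rw [← Finset.sum_mul, hπsum, one_mul]
  have outer : ∀ s a, |∑ s' : S, P s a s' * ∑ a' : A, π s' a' * D s' a'| ≤ M := by
    intro s a
    calc |∑ s' : S, P s a s' * ∑ a' : A, π s' a' * D s' a'|
        ≤ ∑ s' : S, |P s a s' * ∑ a' : A, π s' a' * D s' a'| :=
          Finset.abs_sum_le_sum_abs _ _
      _ ≤ ∑ s' : S, P s a s' * M := by
          refine Finset.sum_le_sum fun s' _ => ?_
          rw [abs_mul, abs_of_nonneg (hPnonneg s a s')]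
          exact mul_le_mul_of_nonneg_left (inner s') (hPnonneg s a s')
      _ = M := by rw [← Finset.sum_mul, hPsum, one_mul]
  have hMle : M ≤ γ * M := by
    calc M = |D s₀ a₀| := rfl
      _ = γ * |∑ s' : S, P s₀ a₀ s' * ∑ a' : A, π s' a' * D s' a'| := by
          rw [hD s₀ a₀, abs_mul, abs_of_nonneg hγ0]
      _ ≤ γ * M := mul_le_mul_of_nonneg_left (outer s₀ a₀) hγ0
  have hMzero : M = 0 := by nlinarith
  have : |D s a| ≤ 0 := hMzero ▸ hM s a
  have hD0 : D s a = 0 := abs_eq_zero.mp (le_antisymm this (abs_nonneg _))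
  have : Q' s a - Q s a + φ s = 0 := hD0
  linarith
end

section
/- Potential-based reward shaping preserves optimal policies: a policy is optimal in the shaped MDP M' (with reward R + γφ(s') - φ(s)) if and only if it is optimal in the original MDP M. -/
private lemma pbrs_ciSup_sub_const {A : Type*} [Fintype A] [Nonempty A]
    (g : A → ℝ) (c : ℝ) : (⨆ a, (g a - c)) = (⨆ a, g a) - c := by
  apply le_antisymm
  · exact ciSup_le fun a =>
      sub_le_sub_right (le_ciSup (Set.finite_range g).bddAbove a) c
  · rw [sub_le_iff_le_add]
    refine ciSup_le fun a => ?_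
    have := le_ciSup (Set.finite_range fun a => g a - c).bddAbove a
    linarith

private lemma pbrs_abs_ciSup_sub {A : Type*} [Fintype A] [Nonempty A]
    (g h : A → ℝ) (M : ℝ) (hM : ∀ a, |g a - h a| ≤ M) :
    |(⨆ a, g a) - ⨆ a, h a| ≤ M := by
  rw [abs_le]
  constructor
  · rw [neg_le, neg_sub, sub_le_iff_le_add]
    refine ciSup_le fun a => ?_
    have h1 := le_ciSup (Set.finite_range g).bddAbove a
    have h2 := (abs_le.mp (hM a)).1
    linarith
  · rw [sub_le_iff_le_add]
    refine ciSup_le fun a => ?_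
    have h1 := le_ciSup (Set.finite_range h).bddAbove a
    have h2 := (abs_le.mp (hM a)).2
    linarith

/-- Potential-based reward shaping preserves optimal policies: a (deterministic
stationary) policy is greedy with respect to the optimal action-value function
of the shaped MDP iff it is greedy with respect to that of the original MDP. -/
theorem pbrs_preserves_optimal_policies {S A : Type*} [Fintype S] [Fintype A]
    [Nonempty S] [Nonempty A]
    (P : S → A → S → ℝ) (R R' : S → A → S → ℝ) (γ : ℝ) (φ : S → ℝ)
    (hγ0 : 0 ≤ γ) (hγ1 : γ < 1)
    (hPnonneg : ∀ s a s', 0 ≤ P s a s')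
    (hPsum : ∀ s a, ∑ s' : S, P s a s' = 1)
    (hR' : ∀ s a s', R' s a s' = R s a s' + γ * φ s' - φ s)
    (Qstar Qstar' : S → A → ℝ)
    (hQstar : ∀ s a, Qstar s a =
      ∑ s' : S, P s a s' * (R s a s' + γ * ⨆ a' : A, Qstar s' a'))
    (hQstar' : ∀ s a, Qstar' s a =
      ∑ s' : S, P s a s' * (R' s a s' + γ * ⨆ a' : A, Qstar' s' a'))
    (π : S → A) :
    (∀ s, Qstar' s (π s) = ⨆ a : A, Qstar' s a) ↔
      (∀ s, Qstar s (π s) = ⨆ a : A, Qstar s a) := by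
  -- f is the discrepancy; we show it vanishes.
  set f : S → A → ℝ := fun s a => Qstar' s a - Qstar s a + φ s with hf
  have key : ∀ s a, f s a =
      γ * ∑ s' : S, P s a s' *
        (φ s' + (⨆ a' : A, Qstar' s' a') - ⨆ a' : A, Qstar s' a') := by
    intro s a
    have h1 : f s a =
        (∑ s' : S, (P s a s' *
          (γ * (φ s' + (⨆ a' : A, Qstar' s' a') - ⨆ a' : A, Qstar s' a'))
          - P s a s' * φ s)) + φ s := by
      show Qstar' s a - Qstar s a + φ s = _
      rw [hQstar' s a, hQstar s a]
      simp only [hR', ← Finset.sum_sub_distrib]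
      congr 1
      apply Finset.sum_congr rfl
      intro s' _
      ring
    rw [h1, Finset.sum_sub_distrib, ← Finset.sum_mul, hPsum, one_mul,
      Finset.mul_sum]
    have : ∀ s' : S, P s a s' *
        (γ * (φ s' + (⨆ a' : A, Qstar' s' a') - ⨆ a' : A, Qstar s' a'))
        = γ * (P s a s' *
          (φ s' + (⨆ a' : A, Qstar' s' a') - ⨆ a' : A, Qstar s' a')) := by
      intro s'; ring
    rw [Finset.sum_congr rfl fun s' _ => this s']
    ring
  -- maximum of |f|
  obtain ⟨⟨s₀, a₀⟩, hmax⟩ := Finite.exists_max fun p : S × A => |f p.1 p.2|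
  set M := |f s₀ a₀| with hM
  have hMnonneg : 0 ≤ M := abs_nonneg _
  have hbound : ∀ s a, |f s a| ≤ M := fun s a => hmax (s, a)
  have hzero : ∀ s a, f s a = 0 := by
    have hMγ : M ≤ γ * M := by
      rw [hM]
      nth_rw 1 [key s₀ a₀]
      rw [abs_mul, abs_of_nonneg hγ0]
      apply mul_le_mul_of_nonneg_left _ hγ0
      calc |∑ s' : S, P s₀ a₀ s' *
            (φ s' + (⨆ a' : A, Qstar' s' a') - ⨆ a' : A, Qstar s' a')|
          ≤ ∑ s' : S, |P s₀ a₀ s' *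
            (φ s' + (⨆ a' : A, Qstar' s' a') - ⨆ a' : A, Qstar s' a')| :=
            Finset.abs_sum_le_sum_abs _ _
        _ ≤ ∑ s' : S, P s₀ a₀ s' * M := by
            apply Finset.sum_le_sum
            intro s' _
            rw [abs_mul, abs_of_nonneg (hPnonneg _ _ _)]
            apply mul_le_mul_of_nonneg_left _ (hPnonneg _ _ _)
            have : φ s' + (⨆ a' : A, Qstar' s' a') - ⨆ a' : A, Qstar s' a'
                = (⨆ a' : A, Qstar' s' a') - ⨆ a' : A, (Qstar s' a' - φ s') := by
              rw [pbrs_ciSup_sub_const]; ring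
            rw [this]
            refine pbrs_abs_ciSup_sub _ _ M fun a' => ?_
            have heq : Qstar' s' a' - (Qstar s' a' - φ s') = f s' a' := by
              show _ = Qstar' s' a' - Qstar s' a' + φ s'
              ring
            rw [heq]
            exact hbound s' a'
        _ = M := by rw [← Finset.sum_mul, hPsum, one_mul]
    have hM0 : M ≤ 0 := by nlinarith
    intro s a
    have := hbound s a
    have : |f s a| ≤ 0 := le_trans this hM0
    exact abs_eq_zero.mp (le_antisymm this (abs_nonneg _))
  have hQ' : ∀ s a, Qstar' s a = Qstar s a - φ s := by
    intro s a
    have h2 : Qstar' s a - Qstar s a + φ s = 0 := hzero s a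
    linarith
  have hsup : ∀ s : S, (⨆ a : A, Qstar' s a) = (⨆ a : A, Qstar s a) - φ s := by
    intro s
    calc (⨆ a : A, Qstar' s a) = ⨆ a : A, (Qstar s a - φ s) := by
          congr 1; funext a; exact hQ' s a
      _ = (⨆ a : A, Qstar s a) - φ s := pbrs_ciSup_sub_const _ _
  constructor
  · intro h s
    have := h s
    rw [hQ', hsup] at this
    linarith
  · intro h s
    rw [hQ', hsup, h s]
end

section
/- The optimal Q-functions of the original and shaped MDPs differ by the potential: Q*_{M'}(s,a) = Q*_M(s,a) - φ(s) for all (s,a), and consequently argmax_a Q*_{M'}(s,a) = argmax_a Q*_M(s,a) for every state s. -/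
private lemma fin_bdd {A : Type*} [Fintype A] (f : A → ℝ) :
    BddAbove (Set.range f) := (Set.finite_range f).bddAbove

/-- sup of shifted function. -/
private lemma csup_shift {A : Type*} [Fintype A] [Nonempty A] (f : A → ℝ) (c : ℝ) :
    (⨆ a, (f a - c)) = (⨆ a, f a) - c := by
  apply le_antisymm
  · exact ciSup_le fun a => sub_le_sub_right (le_ciSup (fin_bdd f) a) c
  · rw [sub_le_iff_le_add]
    exact ciSup_le fun a => by
      have := le_ciSup (fin_bdd (fun a => f a - c)) a
      linarith
/-- sup difference bound. -/
private lemma csup_diff_le {A : Type*} [Fintype A] [Nonempty A] (f g : A → ℝ) (M : ℝ)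
    (h : ∀ a, |f a - g a| ≤ M) : |(⨆ a, f a) - ⨆ a, g a| ≤ M := by
  rw [abs_le]
  constructor
  · rw [neg_le, neg_sub, sub_le_iff_le_add]
    exact ciSup_le fun a => by
      have h1 := h a; rw [abs_le] at h1
      have h2 := le_ciSup (fin_bdd f) a; linarith
  · rw [sub_le_iff_le_add]
    exact ciSup_le fun a => by
      have h1 := h a; rw [abs_le] at h1
      have h2 := le_ciSup (fin_bdd g) a; linarith

/-- The optimal Q-functions of the original and shaped MDPs differ exactly by
the potential: `Q*_{M'} s a = Q*_M s a - φ s`, and consequently the argmax sets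
over actions coincide at every state. -/
theorem pbrs_optimal_Q_shift {S A : Type*} [Fintype S] [Fintype A]
    [Nonempty S] [Nonempty A]
    (P : S → A → S → ℝ) (R R' : S → A → S → ℝ) (γ : ℝ) (φ : S → ℝ)
    (hγ0 : 0 ≤ γ) (hγ1 : γ < 1)
    (hPnonneg : ∀ s a s', 0 ≤ P s a s')
    (hPsum : ∀ s a, ∑ s' : S, P s a s' = 1)
    (hR' : ∀ s a s', R' s a s' = R s a s' + γ * φ s' - φ s)
    (Qstar Qstar' : S → A → ℝ)
    (hQstar : ∀ s a, Qstar s a =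
      ∑ s' : S, P s a s' * (R s a s' + γ * ⨆ a' : A, Qstar s' a'))
    (hQstar' : ∀ s a, Qstar' s a =
      ∑ s' : S, P s a s' * (R' s a s' + γ * ⨆ a' : A, Qstar' s' a')) :
    (∀ s a, Qstar' s a = Qstar s a - φ s) ∧
      (∀ s : S, {a : A | Qstar' s a = ⨆ a' : A, Qstar' s a'} =
        {a : A | Qstar s a = ⨆ a' : A, Qstar s a'}) := by
  set D : S → A → ℝ := fun s a => Qstar' s a - (Qstar s a - φ s) with hD
  -- key identity: D s a = γ * ∑ P * (sup Q' - (sup Q - φ))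
  have hDid : ∀ s a, D s a = γ * ∑ s' : S, P s a s' *
      ((⨆ a' : A, Qstar' s' a') - ((⨆ a' : A, Qstar s' a') - φ s')) := by
    intro s a
    have h1 := hQstar s a
    have h2 := hQstar' s a
    have hphi : (∑ s' : S, P s a s' * φ s) = φ s := by
      rw [← Finset.sum_mul, hPsum, one_mul]
    simp only [hD]
    rw [h1, h2]
    rw [Finset.mul_sum, ← hphi]
    rw [← Finset.sum_sub_distrib, ← Finset.sum_sub_distrib]
    apply Finset.sum_congr rfl
    intro s' _
    rw [hR' s a s']
    ring
  -- pick maximizer of |D| over S × A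
  obtain ⟨⟨s₀, a₀⟩, -, hmax⟩ := Finset.exists_max_image (Finset.univ : Finset (S × A))
    (fun p => |D p.1 p.2|) ⟨Classical.arbitrary _, Finset.mem_univ _⟩
  set M := |D s₀ a₀| with hM
  have hMnn : 0 ≤ M := abs_nonneg _
  have hbound : ∀ s a, |D s a| ≤ γ * M := by
    intro s a
    rw [hDid s a, abs_mul, abs_of_nonneg hγ0]
    apply mul_le_mul_of_nonneg_left _ hγ0
    calc |∑ s' : S, P s a s' *
        ((⨆ a' : A, Qstar' s' a') - ((⨆ a' : A, Qstar s' a') - φ s'))|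
        ≤ ∑ s' : S, |P s a s' *
        ((⨆ a' : A, Qstar' s' a') - ((⨆ a' : A, Qstar s' a') - φ s'))| :=
          Finset.abs_sum_le_sum_abs _ _
      _ ≤ ∑ s' : S, P s a s' * M := by
          apply Finset.sum_le_sum
          intro s' _
          rw [abs_mul, abs_of_nonneg (hPnonneg s a s')]
          apply mul_le_mul_of_nonneg_left _ (hPnonneg s a s')
          rw [← csup_shift (fun a' => Qstar s' a') (φ s')]
          apply csup_diff_le
          intro a'
          have := hmax (s', a') (Finset.mem_univ _)
          simpa [hD] using this
      _ = M := by rw [← Finset.sum_mul, hPsum, one_mul]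
  have hM0 : M ≤ 0 := by
    have := hbound s₀ a₀
    nlinarith
  have hDzero : ∀ s a, D s a = 0 := by
    intro s a
    have h1 := hmax (s, a) (Finset.mem_univ _)
    have h2 : |D s a| ≤ 0 := le_trans h1 hM0
    exact abs_eq_zero.mp (le_antisymm h2 (abs_nonneg _))
  have hshift : ∀ s a, Qstar' s a = Qstar s a - φ s := by
    intro s a
    have := hDzero s a
    simp only [hD] at this
    linarith
  refine ⟨hshift, fun s => ?_⟩
  have hsup : (⨆ a' : A, Qstar' s a') = (⨆ a' : A, Qstar s a') - φ s := by
    calc (⨆ a' : A, Qstar' s a') = ⨆ a' : A, (Qstar s a' - φ s) := by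
          congr 1; ext a'; exact hshift s a'
      _ = (⨆ a' : A, Qstar s a') - φ s := csup_shift _ _
  ext a
  simp only [Set.mem_setOf_eq, hshift s a, hsup]
  constructor <;> intro h <;> linarith
end

section
/- Optimal policies of the milestone-augmented MDP project to optimal policies of the original MDP: any policy π̃ that is optimal in M̃ satisfies, for every (s, m), that every action in the support of π̃(s, m) is an optimal action for state s in M. -/
lemma abs_ciSup_sub_ciSup_le_aux {A : Type*} [Fintype A] [Nonempty A]
    (g h : A → ℝ) (D : ℝ) (hD : ∀ a, |g a - h a| ≤ D) :
    |(⨆ a, g a) - ⨆ a, h a| ≤ D := by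
  have bg : BddAbove (Set.range g) := (Set.finite_range g).bddAbove
  have bh : BddAbove (Set.range h) := (Set.finite_range h).bddAbove
  rw [abs_sub_le_iff]
  constructor
  · rw [sub_le_iff_le_add]
    refine ciSup_le fun a => ?_
    have h1 : g a - h a ≤ D := (abs_le.mp (hD a)).2
    have h2 : h a ≤ ⨆ a, h a := le_ciSup bh a
    linarith
  · rw [sub_le_iff_le_add]
    refine ciSup_le fun a => ?_
    have h1 : -(D) ≤ g a - h a := (abs_le.mp (hD a)).1
    have h2 : g a ≤ ⨆ a, g a := le_ciSup bg a
    linarith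

/-- Optimal policies of the milestone-augmented MDP project to optimal policies
of the original MDP: any policy that is optimal in `M̃` (every action in its
support attains the optimal augmented Q-value) is such that, for every `(s, m)`,
every action in its support is optimal for state `s` in `M`. -/
theorem augmented_optimal_policy_projects {S A : Type*} [Fintype S] [Fintype A]
    [Nonempty S] [Nonempty A] (K : ℕ)
    (P : S → A → S → ℝ) (R : S → A → S → ℝ) (γ : ℝ)
    (f : S → Fin (K + 1) → Fin (K + 1))
    (hγ0 : 0 ≤ γ) (hγ1 : γ < 1)
    (hPnonneg : ∀ s a s', 0 ≤ P s a s')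
    (hPsum : ∀ s a, ∑ s' : S, P s a s' = 1)
    (QM : S → A → ℝ)
    (hQM : ∀ s a, QM s a =
      ∑ s' : S, P s a s' * (R s a s' + γ * ⨆ a' : A, QM s' a'))
    (Qt : S × Fin (K + 1) → A → ℝ)
    (hQt : ∀ sm a, Qt sm a =
      ∑ s' : S, P sm.1 a s' * (R sm.1 a s' + γ * ⨆ a' : A, Qt (s', f s' sm.2) a'))
    (πt : S × Fin (K + 1) → A → ℝ)
    (hπnonneg : ∀ sm a, 0 ≤ πt sm a)
    (hπsum : ∀ sm, ∑ a : A, πt sm a = 1)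
    (hπopt : ∀ sm a, 0 < πt sm a → Qt sm a = ⨆ a' : A, Qt sm a') :
    ∀ s (m : Fin (K + 1)) (a : A), 0 < πt (s, m) a →
      QM s a = ⨆ a' : A, QM s a' := by
  set Φ : (S × Fin (K + 1)) × A → ℝ := fun p => |Qt p.1 p.2 - QM p.1.1 p.2| with hΦ
  obtain ⟨p₀, -, hp₀⟩ := Finset.exists_max_image (Finset.univ : Finset ((S × Fin (K+1)) × A)) Φ
    Finset.univ_nonempty
  have hp₀' : ∀ p, Φ p ≤ Φ p₀ := fun p => hp₀ p (Finset.mem_univ p)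
  set D := Φ p₀ with hDdef
  have hD0 : 0 ≤ D := abs_nonneg _
  have key : ∀ sm a, |Qt sm a - QM sm.1 a| ≤ γ * D := by
    intro sm a
    have hrw : Qt sm a - QM sm.1 a =
        ∑ s' : S, P sm.1 a s' * (γ *
          ((⨆ a' : A, Qt (s', f s' sm.2) a') - ⨆ a' : A, QM s' a')) := by
      rw [hQt, hQM, ← Finset.sum_sub_distrib]
      exact Finset.sum_congr rfl fun s' _ => by ring
    rw [hrw]
    calc |∑ s' : S, P sm.1 a s' * (γ *
          ((⨆ a' : A, Qt (s', f s' sm.2) a') - ⨆ a' : A, QM s' a'))|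
        ≤ ∑ s' : S, |P sm.1 a s' * (γ *
          ((⨆ a' : A, Qt (s', f s' sm.2) a') - ⨆ a' : A, QM s' a'))| :=
          Finset.abs_sum_le_sum_abs _ _
      _ ≤ ∑ s' : S, P sm.1 a s' * (γ * D) := by
          refine Finset.sum_le_sum fun s' _ => ?_
          rw [abs_mul, abs_mul, abs_of_nonneg (hPnonneg _ _ _), abs_of_nonneg hγ0]
          refine mul_le_mul_of_nonneg_left (mul_le_mul_of_nonneg_left ?_ hγ0)
            (hPnonneg _ _ _)
          exact abs_ciSup_sub_ciSup_le_aux _ _ D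
            (fun a' => hp₀' ((s', f s' sm.2), a'))
      _ = γ * D := by rw [← Finset.sum_mul, hPsum, one_mul]
  have hDzero : D = 0 := by
    have h1 : D ≤ γ * D := key p₀.1 p₀.2
    nlinarith
  have heq : ∀ sm a, Qt sm a = QM sm.1 a := by
    intro sm a
    have : |Qt sm a - QM sm.1 a| ≤ 0 := by
      calc |Qt sm a - QM sm.1 a| = Φ (sm, a) := rfl
        _ ≤ D := hp₀' _
        _ = 0 := hDzero
    have := le_antisymm this (abs_nonneg _)
    rwa [abs_eq_zero, sub_eq_zero] at this
  intro s m a ha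
  have h1 := hπopt (s, m) a ha
  have h2 : (⨆ a' : A, Qt (s, m) a') = ⨆ a' : A, QM s a' := by
    congr 1
    funext a'
    exact heq (s, m) a'
  calc QM s a = Qt (s, m) a := (heq (s, m) a).symm
    _ = ⨆ a' : A, Qt (s, m) a' := h1
    _ = ⨆ a' : A, QM s a' := h2
end

section
/- Policy invariance of PBRS-MS: if the shaped reward on the milestone-augmented MDP is R̃' = R̃ + γΦ(s̃') - Φ(s̃) with Φ(s, m) = φ(s) + Ψ(m), then any optimal policy of the shaped augmented MDP M̃' is also an optimal policy (projected to S) of the original MDP M, for any 0 ≤ γ < 1. -/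
open Finset

private lemma sup'_sub_const' {ι : Type*} [Fintype ι] [Nonempty ι] (f : ι → ℝ) (c : ℝ) :
    (univ.sup' univ_nonempty fun i => f i - c) = univ.sup' univ_nonempty f - c := by
  apply le_antisymm
  · refine Finset.sup'_le _ _ fun i _ => ?_
    have := Finset.le_sup' f (mem_univ i); linarith
  · have h : ∀ i ∈ (univ : Finset ι),
        f i ≤ (univ.sup' univ_nonempty fun i => f i - c) + c := fun i _ => by
      have := Finset.le_sup' (fun i => f i - c) (mem_univ i); linarith
    have := Finset.sup'_le univ_nonempty f h
    linarith

private lemma abs_sup'_sub_sup'_le' {ι : Type*} [Fintype ι] [Nonempty ι] (f g : ι → ℝ)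
    (M : ℝ) (h : ∀ i, |f i - g i| ≤ M) :
    |univ.sup' univ_nonempty f - univ.sup' univ_nonempty g| ≤ M := by
  rw [abs_sub_le_iff]
  constructor
  · have h1 : ∀ i ∈ (univ : Finset ι), f i ≤ univ.sup' univ_nonempty g + M := fun i _ => by
      have := Finset.le_sup' g (mem_univ i)
      linarith [(abs_le.1 (h i)).2]
    have := Finset.sup'_le univ_nonempty f h1; linarith
  · have h1 : ∀ i ∈ (univ : Finset ι), g i ≤ univ.sup' univ_nonempty f + M := fun i _ => by
      have := Finset.le_sup' f (mem_univ i)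
      linarith [(abs_le.1 (h i)).1]
    have := Finset.sup'_le univ_nonempty g h1; linarith

/-- Policy invariance of PBRS-MS: with shaped reward
`R̃' = R + γ Φ(s̃') - Φ(s̃)` on the milestone-augmented MDP, where
`Φ(s, m) = φ s + Ψ m`, any optimal (greedy) policy of the shaped augmented MDP
`M̃'` is, projected to `S`, an optimal policy of the original MDP `M`. -/
theorem pbrs_ms_policy_invariance {S A : Type*} [Fintype S] [Fintype A]
    [Nonempty S] [Nonempty A] (K : ℕ)
    (P : S → A → S → ℝ) (R : S → A → S → ℝ) (γ : ℝ)
    (f : S → Fin (K + 1) → Fin (K + 1))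
    (φ : S → ℝ) (Ψ : Fin (K + 1) → ℝ)
    (hγ0 : 0 ≤ γ) (hγ1 : γ < 1)
    (hPnonneg : ∀ s a s', 0 ≤ P s a s')
    (hPsum : ∀ s a, ∑ s' : S, P s a s' = 1)
    (R' : S × Fin (K + 1) → A → S × Fin (K + 1) → ℝ)
    (hR' : ∀ sm a sm', R' sm a sm' =
      R sm.1 a sm'.1 + γ * (φ sm'.1 + Ψ sm'.2) - (φ sm.1 + Ψ sm.2))
    (QM : S → A → ℝ)
    (hQM : ∀ s a, QM s a =
      ∑ s' : S, P s a s' * (R s a s' + γ * ⨆ a' : A, QM s' a'))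
    (Qt' : S × Fin (K + 1) → A → ℝ)
    (hQt' : ∀ sm a, Qt' sm a =
      ∑ s' : S, P sm.1 a s' *
        (R' sm a (s', f s' sm.2) + γ * ⨆ a' : A, Qt' (s', f s' sm.2) a'))
    (πt : S × Fin (K + 1) → A)
    (hπopt : ∀ sm, Qt' sm (πt sm) = ⨆ a : A, Qt' sm a) :
    ∀ s (m : Fin (K + 1)), QM s (πt (s, m)) = ⨆ a : A, QM s a := by
  classical
  -- replace iSup by Finset.sup'
  have hsQM : ∀ s : S, (⨆ a : A, QM s a) = univ.sup' univ_nonempty (QM s) := fun s =>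
    (Finset.sup'_univ_eq_ciSup (QM s)).symm
  have hsQt : ∀ sm, (⨆ a : A, Qt' sm a) = univ.sup' univ_nonempty (Qt' sm) := fun sm =>
    (Finset.sup'_univ_eq_ciSup (Qt' sm)).symm
  simp only [hsQM] at hQM
  simp only [hsQt] at hQt' hπopt
  set c : S × Fin (K + 1) → ℝ := fun sm => φ sm.1 + Ψ sm.2 with hcdef
  set D : S × Fin (K + 1) → A → ℝ := fun sm a => Qt' sm a - (QM sm.1 a - c sm) with hDdef
  set M : ℝ := (univ : Finset ((S × Fin (K + 1)) × A)).sup' univ_nonempty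
      (fun p => |D p.1 p.2|) with hMdef
  have hle : ∀ sm a, |D sm a| ≤ M := fun sm a =>
    Finset.le_sup' (fun p => |D p.1 p.2|) (mem_univ (sm, a))
  have hM0 : 0 ≤ M :=
    le_trans (abs_nonneg _) (hle (Classical.arbitrary _) (Classical.arbitrary _))
  -- key contraction bound
  have key : ∀ sm a, |D sm a| ≤ γ * M := by
    intro sm a
    have hDeq : D sm a = γ * ∑ s' : S, P sm.1 a s' *
        (univ.sup' univ_nonempty (Qt' (s', f s' sm.2)) -
         (univ.sup' univ_nonempty (QM s') - c (s', f s' sm.2))) := by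
      have e1 : Qt' sm a = ∑ s' : S, P sm.1 a s' *
          (R sm.1 a s' + γ * c (s', f s' sm.2) - c sm +
            γ * univ.sup' univ_nonempty (Qt' (s', f s' sm.2))) := by
        rw [hQt']
        refine Finset.sum_congr rfl fun s' _ => ?_
        rw [hR']
      have e2 : QM sm.1 a - c sm = (∑ s' : S, P sm.1 a s' *
          (R sm.1 a s' + γ * univ.sup' univ_nonempty (QM s') - c sm)) := by
        rw [hQM]
        have : ∑ s' : S, P sm.1 a s' *
            (R sm.1 a s' + γ * univ.sup' univ_nonempty (QM s') - c sm)
            = (∑ s' : S, P sm.1 a s' *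
              (R sm.1 a s' + γ * univ.sup' univ_nonempty (QM s')))
              - (∑ s' : S, P sm.1 a s') * c sm := by
          rw [Finset.sum_mul, ← Finset.sum_sub_distrib]
          refine Finset.sum_congr rfl fun s' _ => by ring
        rw [this, hPsum]
        ring
      rw [hDdef]
      simp only
      rw [e1, e2, ← Finset.sum_sub_distrib, Finset.mul_sum]
      refine Finset.sum_congr rfl fun s' _ => by ring
    rw [hDeq, abs_mul, abs_of_nonneg hγ0]
    refine mul_le_mul_of_nonneg_left ?_ hγ0
    calc |∑ s' : S, P sm.1 a s' *
        (univ.sup' univ_nonempty (Qt' (s', f s' sm.2)) -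
         (univ.sup' univ_nonempty (QM s') - c (s', f s' sm.2)))|
        ≤ ∑ s' : S, |P sm.1 a s' *
        (univ.sup' univ_nonempty (Qt' (s', f s' sm.2)) -
         (univ.sup' univ_nonempty (QM s') - c (s', f s' sm.2)))| :=
          Finset.abs_sum_le_sum_abs _ _
      _ ≤ ∑ s' : S, P sm.1 a s' * M := by
          refine Finset.sum_le_sum fun s' _ => ?_
          rw [abs_mul, abs_of_nonneg (hPnonneg _ _ _)]
          refine mul_le_mul_of_nonneg_left ?_ (hPnonneg _ _ _)
          have hconst : univ.sup' univ_nonempty (QM s') - c (s', f s' sm.2)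
              = univ.sup' univ_nonempty (fun a' => QM s' a' - c (s', f s' sm.2)) :=
            (sup'_sub_const' (QM s') _).symm
          rw [hconst]
          exact abs_sup'_sub_sup'_le' _ _ M (fun a' => hle (s', f s' sm.2) a')
      _ = M := by rw [← Finset.sum_mul, hPsum, one_mul]
  -- M = 0
  have hMzero : M = 0 := by
    obtain ⟨p, -, hp⟩ := Finset.exists_mem_eq_sup'
      (univ_nonempty : (univ : Finset ((S × Fin (K + 1)) × A)).Nonempty)
      (fun p => |D p.1 p.2|)
    have hM' : M = |D p.1 p.2| := hMdef.trans hp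
    have : M ≤ γ * M := hM' ▸ key p.1 p.2
    nlinarith
  have hD0 : ∀ sm a, Qt' sm a = QM sm.1 a - c sm := by
    intro sm a
    have h1 : |D sm a| ≤ 0 := hMzero ▸ hle sm a
    have := abs_nonneg (D sm a)
    have : D sm a = 0 := abs_eq_zero.mp (le_antisymm h1 this)
    simp only [hDdef] at this
    linarith
  intro s m
  have h1 := hπopt (s, m)
  have h2 : univ.sup' univ_nonempty (Qt' (s, m)) = univ.sup' univ_nonempty (QM s) - c (s, m) := by
    rw [← sup'_sub_const']
    exact Finset.sup'_congr _ rfl fun a _ => hD0 (s, m) a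
  rw [h2, hD0] at h1
  rw [hsQM]
  simp only at h1
  linarith
end

section
/- PBRS-MS breaks potential collapse: with γ = 1 and zero base reward, consider two trajectories of equal length from the same start state whose terminal states have equal potential, but where trajectory A attains milestone level k at some intermediate step while trajectory B never exceeds milestone level j < k. Then the total PBRS-MS shaped return of A exceeds that of B by at least Σ_{i=j+1}^{k} R̂_i > 0. -/
/-- PBRS-MS breaks potential collapse: with `γ = 1` and zero base reward, if
two equal-length trajectories share the same start state and equal terminal
potentials, but trajectory A attains milestone level `k` at some intermediate
step while trajectory B never exceeds level `j < k`, then the total PBRS-MS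
shaped return of A exceeds that of B by at least `∑_{i=j+1}^{k} R̂ i > 0`. -/
theorem pbrs_ms_breaks_collapse {S : Type*} (K : ℕ) (hK : 0 < K)
    (φ : S → ℝ) (φmax : ℝ) (hφmax : 0 < φmax)
    (Rhat : ℕ → ℝ) (hRhat : ∀ i ∈ Finset.Icc 1 K, 0 < Rhat i)
    (Ψ : ℕ → ℝ) (hΨ : ∀ mm, Ψ mm = ∑ i ∈ Finset.Icc 1 mm, Rhat i)
    (lvl : S → ℕ)
    (hlvl : ∀ x, lvl x =
      ((Finset.Icc 1 K).filter (fun i : ℕ => (i : ℝ) / K * φmax ≤ φ x)).sup id)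
    (N : ℕ) (sA sB : ℕ → S) (mA mB : ℕ → ℕ)
    (hmA0 : mA 0 = 0) (hmArec : ∀ t, mA (t + 1) = max (mA t) (lvl (sA (t + 1))))
    (hmB0 : mB 0 = 0) (hmBrec : ∀ t, mB (t + 1) = max (mB t) (lvl (sB (t + 1))))
    (j k : ℕ) (hjk : j < k) (hkK : k ≤ K)
    (hstart : sA 0 = sB 0)
    (hend : φ (sA N) = φ (sB N))
    (hAk : ∃ t, 1 ≤ t ∧ t ≤ N ∧ k ≤ lvl (sA t))
    (hBj : ∀ t, 1 ≤ t → t ≤ N → lvl (sB t) ≤ j) :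
    (∑ t ∈ Finset.range N,
        ((φ (sA (t + 1)) - φ (sA t)) + (Ψ (mA (t + 1)) - Ψ (mA t)))) -
      (∑ t ∈ Finset.range N,
        ((φ (sB (t + 1)) - φ (sB t)) + (Ψ (mB (t + 1)) - Ψ (mB t)))) ≥
        (∑ i ∈ Finset.Icc (j + 1) k, Rhat i) ∧
      0 < ∑ i ∈ Finset.Icc (j + 1) k, Rhat i := by
  -- lvl is bounded by K
  have hlvlK : ∀ x, lvl x ≤ K := by
    intro x
    rw [hlvl x]
    apply Finset.sup_le
    intro b hb
    simp only [Finset.mem_filter, Finset.mem_Icc] at hb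
    exact hb.1.2
  -- telescoping
  have tel : ∀ f : ℕ → ℝ, ∑ t ∈ Finset.range N, (f (t + 1) - f t) = f N - f 0 :=
    fun f => Finset.sum_range_sub f N
  have hsum : ∀ (s : ℕ → S) (m : ℕ → ℕ),
      ∑ t ∈ Finset.range N,
        ((φ (s (t + 1)) - φ (s t)) + (Ψ (m (t + 1)) - Ψ (m t)))
      = (φ (s N) - φ (s 0)) + (Ψ (m N) - Ψ (m 0)) := by
    intro s m
    rw [Finset.sum_add_distrib, tel (fun t => φ (s t)), tel (fun t => Ψ (m t))]
  -- mA monotone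
  have hmAmono : Monotone mA := by
    apply monotone_nat_of_le_succ
    intro t; rw [hmArec t]; exact le_max_left _ _
  -- mA N ≥ k
  obtain ⟨t, ht1, htN, htk⟩ := hAk
  have hkmA : k ≤ mA N := by
    obtain ⟨t', rfl⟩ : ∃ t', t = t' + 1 := ⟨t - 1, (Nat.succ_pred_eq_of_pos ht1).symm⟩
    have : k ≤ mA (t' + 1) := by rw [hmArec t']; exact le_trans htk (le_max_right _ _)
    exact le_trans this (hmAmono htN)
  -- mA t ≤ K for all t
  have hmAK : ∀ t, mA t ≤ K := by
    intro t; induction t with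
    | zero => rw [hmA0]; exact Nat.zero_le K
    | succ n ih => rw [hmArec n]; exact max_le ih (hlvlK _)
  -- mB t ≤ j for all t ≤ N
  have hmBj : ∀ t, t ≤ N → mB t ≤ j := by
    intro t; induction t with
    | zero => intro _; rw [hmB0]; exact Nat.zero_le j
    | succ n ih =>
      intro h
      rw [hmBrec n]
      exact max_le (ih (le_trans (Nat.le_succ n) h)) (hBj (n + 1) (Nat.succ_le_succ (Nat.zero_le n)) h)
  have hbj : mB N ≤ j := hmBj N le_rfl
  -- key inequality
  have key : Ψ (mA N) - Ψ (mB N) ≥ ∑ i ∈ Finset.Icc (j + 1) k, Rhat i := by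
    rw [hΨ, hΨ]
    have hsub : Finset.Icc 1 (mB N) ⊆ Finset.Icc 1 (mA N) := by
      apply Finset.Icc_subset_Icc_right
      exact le_trans hbj (le_trans (le_of_lt hjk) hkmA)
    rw [← Finset.sum_sdiff hsub]
    have : ∑ i ∈ Finset.Icc 1 (mA N) \ Finset.Icc 1 (mB N), Rhat i ≥
        ∑ i ∈ Finset.Icc (j + 1) k, Rhat i := by
      apply Finset.sum_le_sum_of_subset_of_nonneg
      · intro i hi
        simp only [Finset.mem_Icc] at hi
        simp only [Finset.mem_sdiff, Finset.mem_Icc]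
        exact ⟨⟨le_trans (Nat.le_add_left 1 j) hi.1, le_trans hi.2 hkmA⟩,
          fun h => absurd (le_trans h.2 hbj) (by omega)⟩
      · intro i hi _
        simp only [Finset.mem_sdiff, Finset.mem_Icc] at hi
        exact le_of_lt (hRhat i (Finset.mem_Icc.mpr ⟨hi.1.1, le_trans hi.1.2 (hmAK N)⟩))
    linarith
  constructor
  · rw [hsum sA mA, hsum sB mB, hstart, hend, hmA0, hmB0]
    linarith
  · apply Finset.sum_pos
    · intro i hi
      simp only [Finset.mem_Icc] at hi
      exact hRhat i (Finset.mem_Icc.mpr ⟨by omega, le_trans hi.2 hkK⟩)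
    · exact Finset.nonempty_Icc.mpr hjk
end

section
/- For any policy π in a finite MDP with 0 ≤ γ < 1, the value function under the shaped reward R' = R + γφ(s') - φ(s) satisfies V'^π(s) = V^π(s) - φ(s) for all s; hence differences of values between policies are preserved: V'^{π_1}(s) - V'^{π_2}(s) = V^{π_1}(s) - V^{π_2}(s). -/
/-- If `W` satisfies the homogeneous Bellman equation with discount `γ < 1`,
then `W = 0`. -/
lemma pbrs_aux_zero {S A : Type*} [Fintype S] [Fintype A]
    (P : S → A → S → ℝ) (γ : ℝ) (hγ0 : 0 ≤ γ) (hγ1 : γ < 1)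
    (hPnn : ∀ s a s', 0 ≤ P s a s') (hPsum : ∀ s a, ∑ s' : S, P s a s' = 1)
    (π : S → A → ℝ) (hπnn : ∀ s a, 0 ≤ π s a) (hπsum : ∀ s, ∑ a : A, π s a = 1)
    (W : S → ℝ)
    (hW : ∀ s, W s = γ * ∑ a : A, π s a * ∑ s' : S, P s a s' * W s') :
    ∀ s, W s = 0 := by
  intro s0
  have hne : (Finset.univ : Finset S).Nonempty := ⟨s0, Finset.mem_univ _⟩
  have hle : ∀ t, |W t| ≤ Finset.univ.sup' hne (fun u => |W u|) :=
    fun t => Finset.le_sup' (fun u => |W u|) (Finset.mem_univ t)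
  set M := Finset.univ.sup' hne (fun u => |W u|) with hM
  have hbound : ∀ t, |W t| ≤ γ * M := by
    intro t
    rw [hW t, abs_mul, abs_of_nonneg hγ0]
    apply mul_le_mul_of_nonneg_left _ hγ0
    calc |∑ a : A, π t a * ∑ s' : S, P t a s' * W s'|
        ≤ ∑ a : A, |π t a * ∑ s' : S, P t a s' * W s'| :=
          Finset.abs_sum_le_sum_abs _ _
      _ ≤ ∑ a : A, π t a * M := by
          apply Finset.sum_le_sum
          intro a _
          rw [abs_mul, abs_of_nonneg (hπnn t a)]
          apply mul_le_mul_of_nonneg_left _ (hπnn t a)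
          calc |∑ s' : S, P t a s' * W s'|
              ≤ ∑ s' : S, |P t a s' * W s'| := Finset.abs_sum_le_sum_abs _ _
            _ ≤ ∑ s' : S, P t a s' * M := by
                apply Finset.sum_le_sum
                intro s' _
                rw [abs_mul, abs_of_nonneg (hPnn t a s')]
                exact mul_le_mul_of_nonneg_left (hle s') (hPnn t a s')
            _ = M := by rw [← Finset.sum_mul, hPsum, one_mul]
      _ = M := by rw [← Finset.sum_mul, hπsum, one_mul]
  obtain ⟨t0, -, ht0⟩ := Finset.exists_mem_eq_sup' hne (fun u => |W u|)
  have hMγ : M ≤ γ * M := le_of_eq_of_le ht0 (hbound t0)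
  have hM0 : M ≤ 0 := by nlinarith
  have : |W s0| ≤ 0 := le_trans (hle s0) hM0
  exact abs_nonpos_iff.mp this

/-- Single-policy shaping shift lemma. -/
lemma pbrs_shift {S A : Type*} [Fintype S] [Fintype A]
    (P : S → A → S → ℝ) (R R' : S → A → S → ℝ) (γ : ℝ) (φ : S → ℝ)
    (hγ0 : 0 ≤ γ) (hγ1 : γ < 1)
    (hPnn : ∀ s a s', 0 ≤ P s a s') (hPsum : ∀ s a, ∑ s' : S, P s a s' = 1)
    (hR' : ∀ s a s', R' s a s' = R s a s' + γ * φ s' - φ s)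
    (π : S → A → ℝ) (hπnn : ∀ s a, 0 ≤ π s a) (hπsum : ∀ s, ∑ a : A, π s a = 1)
    (V V' : S → ℝ)
    (hV : ∀ s, V s = ∑ a : A, π s a * ∑ s' : S, P s a s' * (R s a s' + γ * V s'))
    (hV' : ∀ s, V' s = ∑ a : A, π s a * ∑ s' : S, P s a s' * (R' s a s' + γ * V' s')) :
    ∀ s, V' s = V s - φ s := by
  set W : S → ℝ := fun t => V' t - (V t - φ t) with hWdef
  have hW : ∀ t, W t = γ * ∑ a : A, π t a * ∑ s' : S, P t a s' * W s' := by
    intro t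
    have e2 : ∀ a : A,
        ∑ s' : S, P t a s' * (R' t a s' + γ * V' s') =
          (∑ s' : S, P t a s' * (R t a s' + γ * V s'))
            + γ * (∑ s' : S, P t a s' * W s') - φ t := by
      intro a
      have e1 : ∀ s' : S, P t a s' * (R' t a s' + γ * V' s') =
          P t a s' * (R t a s' + γ * V s')
            + γ * (P t a s' * W s') - P t a s' * φ t := by
        intro s'
        rw [hR', hWdef]
        ring
      calc ∑ s' : S, P t a s' * (R' t a s' + γ * V' s')
          = ∑ s' : S, (P t a s' * (R t a s' + γ * V s')
              + γ * (P t a s' * W s') - P t a s' * φ t) := by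
            exact Finset.sum_congr rfl (fun s' _ => e1 s')
        _ = (∑ s' : S, P t a s' * (R t a s' + γ * V s'))
              + γ * (∑ s' : S, P t a s' * W s')
              - (∑ s' : S, P t a s') * φ t := by
            rw [Finset.sum_sub_distrib, Finset.sum_add_distrib, ← Finset.mul_sum,
              Finset.sum_mul]
        _ = _ := by rw [hPsum, one_mul]
    have e3 : V' t = V t + γ * (∑ a : A, π t a * ∑ s' : S, P t a s' * W s') - φ t := by
      rw [hV' t, hV t]
      calc ∑ a : A, π t a * ∑ s' : S, P t a s' * (R' t a s' + γ * V' s')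
          = ∑ a : A, (π t a * ∑ s' : S, P t a s' * (R t a s' + γ * V s')
              + γ * (π t a * ∑ s' : S, P t a s' * W s') - π t a * φ t) := by
            refine Finset.sum_congr rfl (fun a _ => ?_)
            rw [e2 a]; ring
        _ = (∑ a : A, π t a * ∑ s' : S, P t a s' * (R t a s' + γ * V s'))
              + γ * (∑ a : A, π t a * ∑ s' : S, P t a s' * W s')
              - (∑ a : A, π t a) * φ t := by
            rw [Finset.sum_sub_distrib, Finset.sum_add_distrib, ← Finset.mul_sum,
              Finset.sum_mul]
        _ = _ := by rw [hπsum, one_mul]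
    rw [hWdef]
    simp only
    rw [e3]
    ring
  intro s
  have := pbrs_aux_zero P γ hγ0 hγ1 hPnn hPsum π hπnn hπsum W hW s
  have h' : V' s - (V s - φ s) = 0 := this
  linarith

/-- For any stationary policy in a finite MDP with `0 ≤ γ < 1`, the value
function under the shaped reward `R' = R + γ φ s' - φ s` satisfies
`V'^π s = V^π s - φ s`; hence value differences between policies are
preserved by shaping. -/
theorem pbrs_value_shift {S A : Type*} [Fintype S] [Fintype A]
    (P : S → A → S → ℝ) (R R' : S → A → S → ℝ) (γ : ℝ) (φ : S → ℝ)
    (hγ0 : 0 ≤ γ) (hγ1 : γ < 1)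
    (hPnonneg : ∀ s a s', 0 ≤ P s a s')
    (hPsum : ∀ s a, ∑ s' : S, P s a s' = 1)
    (hR' : ∀ s a s', R' s a s' = R s a s' + γ * φ s' - φ s)
    (π₁ π₂ : S → A → ℝ)
    (hπ₁nonneg : ∀ s a, 0 ≤ π₁ s a) (hπ₁sum : ∀ s, ∑ a : A, π₁ s a = 1)
    (hπ₂nonneg : ∀ s a, 0 ≤ π₂ s a) (hπ₂sum : ∀ s, ∑ a : A, π₂ s a = 1)
    (V₁ V₂ V₁' V₂' : S → ℝ)
    (hV₁ : ∀ s, V₁ s = ∑ a : A, π₁ s a * ∑ s' : S, P s a s' * (R s a s' + γ * V₁ s'))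
    (hV₂ : ∀ s, V₂ s = ∑ a : A, π₂ s a * ∑ s' : S, P s a s' * (R s a s' + γ * V₂ s'))
    (hV₁' : ∀ s, V₁' s = ∑ a : A, π₁ s a * ∑ s' : S, P s a s' * (R' s a s' + γ * V₁' s'))
    (hV₂' : ∀ s, V₂' s = ∑ a : A, π₂ s a * ∑ s' : S, P s a s' * (R' s a s' + γ * V₂' s')) :
    (∀ s, V₁' s = V₁ s - φ s) ∧ (∀ s, V₂' s = V₂ s - φ s) ∧
      (∀ s, V₁' s - V₂' s = V₁ s - V₂ s) := by
  have h1 := pbrs_shift P R R' γ φ hγ0 hγ1 hPnonneg hPsum hR' π₁ hπ₁nonneg hπ₁sum V₁ V₁' hV₁ hV₁'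
  have h2 := pbrs_shift P R R' γ φ hγ0 hγ1 hPnonneg hPsum hR' π₂ hπ₂nonneg hπ₂sum V₂ V₂' hV₂ hV₂'
  exact ⟨h1, h2, fun s => by rw [h1 s, h2 s]; ring⟩
end
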